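/- Let ≻_HP be a hope-and-prepare preference with representation (u, C_HP, D_HP) and let ≻_T be a twofold preference with representation (u, C_T, D_T), with the same utility function u. Then ≻_T is more conservative than ≻_HP if and only if C_HP ⊆ C_T and D_HP ⊆ D_T. -/

import Mathlib

/-!
If `C_HP ⊆ C_T` and `D_HP ⊆ D_T`, pick `p ∈ C_HP ∩ D_HP`; then
`min_{C_HP} g ≤ ∫u(g)dp ≤ max_{D_HP} g ≤ max_{D_T} g < min_{C_T} f ≤ min_{C_HP} f ≤ max_{D_HP} f`,
which yields both inequalities defining `f ≻_HP g`.

Conversely, a weak*-continuous linear functional on charges is a finite combination of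
evaluations at events, so a charge `p ∈ C_HP \ C_T` is strictly separated from the compact convex
set `C_T` by the integral of a simple function and hence, after a positive affine rescaling, by
the utility profile of an act `f`: `∫u(f)dp < min_{C_T} ∫u(f)`. A constant act `x` of utility
strictly in between satisfies `f ≻_T x`, but not `f ≻_HP x` because `min_{C_HP} ∫u(f) ≤ ∫u(f)dp`.
The case `D_HP ⊄ D_T` is symmetric.
-/

open Set

section Framework

variable (S : Type*) [MeasurableSpace S]

abbrev MSet := {A : Set S // MeasurableSet A}

/-- The weak* topology on finitely additive probabilities is the topology of pointwise
convergence on events, i.e. the product topology on `MSet S → ℝ`. -/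
def ProbCharges : Set (MSet S → ℝ) :=
  {p | (∀ A, 0 ≤ p A) ∧ p ⟨Set.univ, MeasurableSet.univ⟩ = 1 ∧
    ∀ A B : MSet S, Disjoint A.1 B.1 → p ⟨A.1 ∪ B.1, A.2.union B.2⟩ = p A + p B}

end Framework

section Fns

variable {S : Type*} [MeasurableSpace S]

def IsSimpleFn (φ : S → ℝ) : Prop :=
  (Set.range φ).Finite ∧ ∀ y : ℝ, MeasurableSet (φ ⁻¹' {y})

/-- `∫ φ dp`, with junk value `0` when `φ` is not simple. -/
noncomputable def fInt (p : MSet S → ℝ) (φ : S → ℝ) : ℝ :=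
  @dite _ (IsSimpleFn φ) (Classical.dec _)
    (fun h => ∑ y ∈ h.1.toFinset, y * p ⟨φ ⁻¹' {y}, h.2 y⟩) (fun _ => 0)

def MonotonicFn (I : (S → ℝ) → ℝ) : Prop :=
  ∀ φ ψ, IsSimpleFn φ → IsSimpleFn ψ → (∀ s, φ s ≤ ψ s) → I φ ≤ I ψ

def ConstLinearFn (I : (S → ℝ) → ℝ) : Prop :=
  ∀ φ, IsSimpleFn φ → ∀ a : ℝ, 0 ≤ a → ∀ b : ℝ,
    I (fun s => a * φ s + b) = a * I φ + b

end Fns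

section Acts

variable {S : Type*} [MeasurableSpace S] {V : Type*} [AddCommGroup V] [Module ℝ V]

def IsAct (X : Set V) (f : S → V) : Prop :=
  (∀ s, f s ∈ X) ∧ (Set.range f).Finite ∧ ∀ v : V, MeasurableSet (f ⁻¹' {v})

def mixAct (α : ℝ) (f g : S → V) : S → V := fun s => α • f s + (1 - α) • g s

def constAct (S : Type*) {V : Type*} (x : V) : S → V := fun _ => x

def IsAffineOn (u : V → ℝ) (X : Set V) : Prop :=
  ∀ x ∈ X, ∀ y ∈ X, ∀ α : ℝ, 0 ≤ α → α ≤ 1 →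
    u (α • x + (1 - α) • y) = α * u x + (1 - α) * u y

def NonConstOn (u : V → ℝ) (X : Set V) : Prop := ∃ x ∈ X, ∃ y ∈ X, u x ≠ u y

noncomputable def EU (u : V → ℝ) (f : S → V) (p : MSet S → ℝ) : ℝ :=
  fInt p (fun s => u (f s))

noncomputable def minEU (u : V → ℝ) (C : Set (MSet S → ℝ)) (f : S → V) : ℝ :=
  sInf (EU u f '' C)

noncomputable def maxEU (u : V → ℝ) (D : Set (MSet S → ℝ)) (f : S → V) : ℝ :=
  sSup (EU u f '' D)

def Incomp (R : (S → V) → (S → V) → Prop) (f g : S → V) : Prop := ¬ R f g ∧ ¬ R g f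

end Acts

section Axioms

variable {S : Type*} [MeasurableSpace S] {V : Type*} [AddCommGroup V] [Module ℝ V]
variable (X : Set V) (R : (S → V) → (S → V) → Prop)

def PrefAx1 : Prop :=
  (∀ f g, IsAct X f → IsAct X g → R f g → ¬ R g f) ∧
  (∀ f g h, IsAct X f → IsAct X g → IsAct X h → R f g → R g h → R f h) ∧
  (∃ x ∈ X, ∃ y ∈ X, R (constAct S x) (constAct S y)) ∧
  (∀ x ∈ X, ∀ y ∈ X, ∀ z ∈ X, ¬ R (constAct S x) (constAct S y) →
    ¬ R (constAct S y) (constAct S z) → ¬ R (constAct S x) (constAct S z))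

/-- Axiom 2 (continuity). -/
def PrefAx2 : Prop :=
  ∀ f g h, IsAct X f → IsAct X g → IsAct X h →
    IsOpen {α : Set.Icc (0 : ℝ) 1 | R (mixAct (α : ℝ) f g) h} ∧
    IsOpen {α : Set.Icc (0 : ℝ) 1 | R h (mixAct (α : ℝ) f g)}

/-- Axiom 3 (certainty independence). -/
def PrefAx3 : Prop :=
  ∀ f g, IsAct X f → IsAct X g → ∀ x ∈ X, ∀ α : ℝ, 0 < α → α < 1 →
    (R f g ↔ R (mixAct α f (constAct S x)) (mixAct α g (constAct S x)))

def PrefAx4 : Prop :=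
  ∀ x ∈ X,
    (∀ f g, IsAct X f → IsAct X g → R f (constAct S x) → R g (constAct S x) →
      ∀ α : ℝ, 0 ≤ α → α ≤ 1 → R (mixAct α f g) (constAct S x)) ∧
    (∀ f g, IsAct X f → IsAct X g → R (constAct S x) f → R (constAct S x) g →
      ∀ α : ℝ, 0 ≤ α → α ≤ 1 → R (constAct S x) (mixAct α f g))

/-- Axiom 5 (monotonicity). -/
def PrefAx5 : Prop :=
  ∀ f g, IsAct X f → IsAct X g →
    (∀ s : S, R (constAct S (f s)) (constAct S (g s))) → R f g

def PrefAx6 : Prop :=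
  ∀ f g, IsAct X f → IsAct X g →
    (∀ x ∈ X, Incomp R f (constAct S x) → Incomp R g (constAct S x)) → Incomp R f g

def PrefAx7 : Prop :=
  ∀ f g, IsAct X f → IsAct X g → ∀ x ∈ X, ∀ y ∈ X,
    Incomp R f (constAct S x) → R (constAct S x) g →
    Incomp R g (constAct S y) → R f (constAct S y) → R f g

end Axioms

section Reps

variable {S : Type*} [MeasurableSpace S] {V : Type*} [AddCommGroup V] [Module ℝ V]

def IsHPRep (X : Set V) (R : (S → V) → (S → V) → Prop) (u : V → ℝ)
    (C D : Set (MSet S → ℝ)) : Prop :=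
  IsAffineOn u X ∧ NonConstOn u X ∧
  C.Nonempty ∧ D.Nonempty ∧ C ⊆ ProbCharges S ∧ D ⊆ ProbCharges S ∧
  IsCompact C ∧ IsCompact D ∧ Convex ℝ C ∧ Convex ℝ D ∧ (C ∩ D).Nonempty ∧
  ∀ f g, IsAct X f → IsAct X g →
    (R f g ↔ (minEU u C g < minEU u C f ∧ maxEU u D g < maxEU u D f))

def IsBewleyRep (X : Set V) (R : (S → V) → (S → V) → Prop) (u : V → ℝ)
    (C : Set (MSet S → ℝ)) : Prop :=
  IsAffineOn u X ∧ NonConstOn u X ∧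
  C.Nonempty ∧ C ⊆ ProbCharges S ∧ IsCompact C ∧ Convex ℝ C ∧
  ∀ f g, IsAct X f → IsAct X g → (R f g ↔ ∀ p ∈ C, EU u g p < EU u f p)

def IsTwofoldRep (X : Set V) (R : (S → V) → (S → V) → Prop) (u : V → ℝ)
    (C D : Set (MSet S → ℝ)) : Prop :=
  IsAffineOn u X ∧ NonConstOn u X ∧
  C.Nonempty ∧ D.Nonempty ∧ C ⊆ ProbCharges S ∧ D ⊆ ProbCharges S ∧
  IsCompact C ∧ IsCompact D ∧ Convex ℝ C ∧ Convex ℝ D ∧ (C ∩ D).Nonempty ∧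
  ∀ f g, IsAct X f → IsAct X g → (R f g ↔ maxEU u D g < minEU u C f)

end Reps

section Charges

open MeasureTheory

variable {S : Type*} [MeasurableSpace S] {q : MSet S → ℝ}

lemma charge_eq_zero_of_eq_empty (hq : q ∈ ProbCharges S) {A : MSet S} (hA : A.1 = ∅) :
    q A = 0 := by
  have h := hq.2.2 A A (by simp [hA])
  rw [show (⟨A.1 ∪ A.1, A.2.union A.2⟩ : MSet S) = A from Subtype.ext (union_self _)] at h
  linarith

lemma charge_biUnion (hq : q ∈ ProbCharges S) {ι : Type*} {t : Finset ι} {P : ι → MSet S}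
    (hdisj : (t : Set ι).PairwiseDisjoint fun i => (P i).1) {U : MSet S}
    (hU : U.1 = ⋃ i ∈ t, (P i).1) :
    q U = ∑ i ∈ t, q (P i) := by
  classical
  induction t using Finset.induction_on generalizing U with
  | empty => exact charge_eq_zero_of_eq_empty hq (by simpa using hU)
  | insert a t ha ih =>
    rw [Finset.coe_insert, Set.pairwiseDisjoint_insert] at hdisj
    have hW : MeasurableSet (⋃ i ∈ t, (P i).1) := t.measurableSet_biUnion fun i _ => (P i).2
    have hdisjW : Disjoint (P a).1 (⋃ i ∈ t, (P i).1) :=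
      Set.disjoint_iUnion₂_right.mpr fun i hi =>
        hdisj.2 i hi fun h => ha (h ▸ hi)
    have hUeq : U = ⟨(P a).1 ∪ ⋃ i ∈ t, (P i).1, (P a).2.union hW⟩ :=
      Subtype.ext (by simp [hU])
    rw [hUeq, hq.2.2 (P a) ⟨_, hW⟩ hdisjW, Finset.sum_insert ha, ih hdisj.1 (U := ⟨_, hW⟩) rfl]

lemma fInt_eq_sum_of_partition (hq : q ∈ ProbCharges S) {φ : S → ℝ} (hφ : IsSimpleFn φ)
    {ι : Type*} (t : Finset ι) (P : ι → MSet S) (v : ι → ℝ)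
    (hdisj : (t : Set ι).PairwiseDisjoint fun i => (P i).1)
    (hcov : ∀ s, ∃ i ∈ t, s ∈ (P i).1) (hval : ∀ i ∈ t, ∀ s ∈ (P i).1, φ s = v i) :
    fInt q φ = ∑ i ∈ t, v i * q (P i) := by
  classical
  have hfiber (y : ℝ) : q ⟨φ ⁻¹' {y}, hφ.2 y⟩ = ∑ i ∈ t with v i = y, q (P i) := by
    refine charge_biUnion hq (hdisj.subset (Finset.coe_subset.mpr (Finset.filter_subset _ _))) ?_
    ext s
    simp only [mem_preimage, mem_singleton_iff, Finset.mem_filter, mem_iUnion, exists_prop]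
    constructor
    · rintro rfl
      obtain ⟨i, hi, hsi⟩ := hcov s
      exact ⟨i, ⟨hi, (hval i hi s hsi).symm⟩, hsi⟩
    · rintro ⟨i, ⟨hi, rfl⟩, hsi⟩
      exact hval i hi s hsi
  have hrange : hφ.1.toFinset ⊆ t.image v := by
    intro y hy
    obtain ⟨s, rfl⟩ := hφ.1.mem_toFinset.mp hy
    obtain ⟨i, hi, hsi⟩ := hcov s
    exact Finset.mem_image.mpr ⟨i, hi, (hval i hi s hsi).symm⟩
  have hempty (y : ℝ) (hy : y ∉ hφ.1.toFinset) : φ ⁻¹' {y} = ∅ :=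
    eq_empty_of_forall_notMem fun s hs => hy (hφ.1.mem_toFinset.mpr ⟨s, hs⟩)
  calc fInt q φ = ∑ y ∈ hφ.1.toFinset, y * q ⟨φ ⁻¹' {y}, hφ.2 y⟩ := dif_pos hφ
    _ = ∑ y ∈ t.image v, y * q ⟨φ ⁻¹' {y}, hφ.2 y⟩ :=
      Finset.sum_subset hrange fun y _ hy => by
        rw [charge_eq_zero_of_eq_empty hq (hempty y hy), mul_zero]
    _ = ∑ y ∈ t.image v, ∑ i ∈ t with v i = y, v i * q (P i) := by
      refine Finset.sum_congr rfl fun y _ => ?_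
      rw [hfiber, Finset.mul_sum]
      exact Finset.sum_congr rfl fun i hi => by rw [(Finset.mem_filter.mp hi).2]
    _ = ∑ i ∈ t, v i * q (P i) :=
      Finset.sum_fiberwise_of_maps_to (fun i hi => Finset.mem_image_of_mem v hi) _

lemma MeasureTheory.SimpleFunc.isSimpleFn (F : SimpleFunc S ℝ) : IsSimpleFn F :=
  ⟨F.finite_range, F.measurableSet_fiber⟩

lemma fInt_coe (F : SimpleFunc S ℝ) :
    fInt q F = ∑ z ∈ F.range, z * q ⟨F ⁻¹' {z}, F.measurableSet_fiber z⟩ :=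
  dif_pos F.isSimpleFn

lemma fInt_map (hq : q ∈ ProbCharges S) {β : Type*} (F : SimpleFunc S β) (g : β → ℝ) :
    fInt q (F.map g) = ∑ z ∈ F.range, g z * q ⟨F ⁻¹' {z}, F.measurableSet_fiber z⟩ :=
  fInt_eq_sum_of_partition hq (F.map g).isSimpleFn _ _ _
    (pairwiseDisjoint_fiber F _) (fun s => ⟨F s, F.mem_range_self s, rfl⟩)
    (fun _ _ _ hs => congrArg g hs)

lemma sum_charge_fiber (hq : q ∈ ProbCharges S) {β : Type*} (F : SimpleFunc S β) :
    ∑ z ∈ F.range, q ⟨F ⁻¹' {z}, F.measurableSet_fiber z⟩ = 1 := by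
  rw [← charge_biUnion hq (pairwiseDisjoint_fiber F _) (U := ⟨univ, MeasurableSet.univ⟩)]
  · exact hq.2.1
  · ext s
    simp

lemma fInt_const (hq : q ∈ ProbCharges S) (b : ℝ) : fInt q (fun _ : S => b) = b := by
  have h := fInt_map hq (SimpleFunc.const S ()) fun _ => b
  rwa [← Finset.mul_sum, sum_charge_fiber hq, mul_one] at h

lemma fInt_affine (hq : q ∈ ProbCharges S) (F : SimpleFunc S ℝ) (a b : ℝ) :
    fInt q (fun s => a * F s + b) = a * fInt q F + b := by
  change fInt q (F.map fun r => a * r + b) = _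
  rw [fInt_map hq, fInt_coe]
  simp only [add_mul, Finset.sum_add_distrib, ← Finset.mul_sum, sum_charge_fiber hq, mul_one,
    mul_assoc]

lemma fInt_add (hq : q ∈ ProbCharges S) (F G : SimpleFunc S ℝ) :
    fInt q ⇑(F + G) = fInt q F + fInt q G := by
  have hsum := fInt_map hq (F.pair G) fun z => z.1 + z.2
  simp only [add_mul, Finset.sum_add_distrib] at hsum
  rw [← fInt_map hq (F.pair G) Prod.fst, ← fInt_map hq (F.pair G) Prod.snd] at hsum
  exact hsum

lemma fInt_sum (hq : q ∈ ProbCharges S) {ι : Type*} (t : Finset ι) (F : ι → SimpleFunc S ℝ) :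
    fInt q ⇑(∑ i ∈ t, F i) = ∑ i ∈ t, fInt q (F i) := by
  classical
  induction t using Finset.induction_on with
  | empty =>
    rw [Finset.sum_empty, Finset.sum_empty, SimpleFunc.coe_zero]
    exact fInt_const hq 0
  | insert a t ha ih => rw [Finset.sum_insert ha, fInt_add hq, ih, Finset.sum_insert ha]

lemma fInt_piecewise_const_zero (hq : q ∈ ProbCharges S) (A : MSet S) (c : ℝ) :
    fInt q ((SimpleFunc.const S c).piecewise A.1 A.2 0) = c * q A := by
  have h := fInt_eq_sum_of_partition hq (((SimpleFunc.const S c).piecewise A.1 A.2 0).isSimpleFn)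
    Finset.univ (fun b => bif b then A else ⟨A.1ᶜ, A.2.compl⟩) (fun b => bif b then c else 0)
    ?_ ?_ ?_
  · simpa using h
  · intro i _ j _ hij
    cases i <;> cases j <;> simp_all [Function.onFun, disjoint_compl_left, disjoint_compl_right]
  · intro s
    by_cases hs : s ∈ A.1
    · exact ⟨true, by simp, by simpa using hs⟩
    · exact ⟨false, by simp, by simpa using hs⟩
  · rintro (_ | _) _ s hs <;> simp_all [SimpleFunc.piecewise_apply]

lemma fInt_mem_of_convex (hq : q ∈ ProbCharges S) (F : SimpleFunc S ℝ) {I : Set ℝ}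
    (hI : Convex ℝ I) (hF : ∀ s, F s ∈ I) : fInt q F ∈ I := by
  rw [fInt_coe]
  simp_rw [mul_comm _ (q _), ← smul_eq_mul]
  refine hI.sum_mem (fun _ _ => hq.1 _) (sum_charge_fiber hq F) fun z hz => ?_
  obtain ⟨s, rfl⟩ := F.mem_range.mp hz
  exact hF s

lemma continuous_fInt (φ : S → ℝ) : Continuous fun q : MSet S → ℝ => fInt q φ := by
  unfold fInt
  split_ifs
  · exact continuous_finsetSum _ fun _ _ => continuous_const.mul (continuous_apply _)
  · exact continuous_const

end Charges

section Separation

lemma ContinuousLinearMap.exists_finsupp_pi {ι : Type*} (L : (ι → ℝ) →L[ℝ] ℝ) :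
    ∃ c : ι →₀ ℝ, ∀ x : ι → ℝ, L x = ∑ i ∈ c.support, c i * x i := by
  have hL : L.toLinearMap ∈
      Submodule.span ℝ (range fun i => LinearMap.proj (R := ℝ) (φ := fun _ : ι => ℝ) i) :=
    (LinearMap.mem_span_iff_continuous _).mpr L.continuous
  obtain ⟨c, hc⟩ := Finsupp.mem_span_range_iff_exists_finsupp.mp hL
  refine ⟨c, fun x => ?_⟩
  rw [← L.coe_coe, ← hc, Finsupp.sum, LinearMap.sum_apply]
  rfl

lemma exists_finsupp_sum_lt_of_notMem {ι : Type*} {C : Set (ι → ℝ)} (hconv : Convex ℝ C)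
    (hcomp : IsCompact C) {p : ι → ℝ} (hp : p ∉ C) :
    ∃ c : ι →₀ ℝ, ∀ q ∈ C, ∑ i ∈ c.support, c i * q i < ∑ i ∈ c.support, c i * p i := by
  obtain ⟨L, r, hC, hp⟩ := geometric_hahn_banach_closed_point hconv hcomp.isClosed hp
  obtain ⟨c, hc⟩ := L.exists_finsupp_pi
  exact ⟨c, fun q hq => by simpa only [hc] using (hC q hq).trans hp⟩

end Separation

section ExpectedUtility

open MeasureTheory

variable {S : Type*} [MeasurableSpace S] {V : Type*} {C D : Set (MSet S → ℝ)}

lemma continuous_EU (u : V → ℝ) (f : S → V) : Continuous (EU u f) :=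
  continuous_fInt _

lemma minEU_le (hC : IsCompact C) {p : MSet S → ℝ} (hp : p ∈ C) (u : V → ℝ) (f : S → V) :
    minEU u C f ≤ EU u f p :=
  csInf_le (hC.image (continuous_EU u f)).bddBelow (mem_image_of_mem _ hp)

lemma le_maxEU (hD : IsCompact D) {p : MSet S → ℝ} (hp : p ∈ D) (u : V → ℝ) (f : S → V) :
    EU u f p ≤ maxEU u D f :=
  le_csSup (hD.image (continuous_EU u f)).bddAbove (mem_image_of_mem _ hp)

lemma IsCompact.exists_minEU_eq (hC : IsCompact C) (hne : C.Nonempty) (u : V → ℝ)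
    (f : S → V) : ∃ p ∈ C, minEU u C f = EU u f p := by
  obtain ⟨p, hp, h⟩ := (hC.image (continuous_EU u f)).sInf_mem (hne.image _)
  exact ⟨p, hp, h.symm⟩

lemma IsCompact.exists_maxEU_eq (hD : IsCompact D) (hne : D.Nonempty) (u : V → ℝ)
    (f : S → V) : ∃ p ∈ D, maxEU u D f = EU u f p := by
  obtain ⟨p, hp, h⟩ := (hD.image (continuous_EU u f)).sSup_mem (hne.image _)
  exact ⟨p, hp, h.symm⟩

lemma minEU_anti {C' : Set (MSet S → ℝ)} (hC' : IsCompact C') (hne : C.Nonempty) (h : C ⊆ C')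
    (u : V → ℝ) (f : S → V) : minEU u C' f ≤ minEU u C f :=
  csInf_le_csInf (hC'.image (continuous_EU u f)).bddBelow (hne.image _) (image_mono h)

lemma maxEU_mono {D' : Set (MSet S → ℝ)} (hD' : IsCompact D') (hne : D.Nonempty) (h : D ⊆ D')
    (u : V → ℝ) (f : S → V) : maxEU u D f ≤ maxEU u D' f :=
  csSup_le_csSup (hD'.image (continuous_EU u f)).bddAbove (hne.image _) (image_mono h)

lemma minEU_le_maxEU (hC : IsCompact C) (hD : IsCompact D) {p : MSet S → ℝ} (hp : p ∈ C ∩ D)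
    (u : V → ℝ) (f : S → V) : minEU u C f ≤ maxEU u D f :=
  (minEU_le hC hp.1 u f).trans (le_maxEU hD hp.2 u f)

lemma isAct_constAct {X : Set V} {z : V} (hz : z ∈ X) : IsAct X (constAct S z) :=
  ⟨fun _ => hz, (SimpleFunc.const S z).finite_range, (SimpleFunc.const S z).measurableSet_fiber⟩

lemma EU_constAct {u : V → ℝ} {q : MSet S → ℝ} (hq : q ∈ ProbCharges S) (z : V) :
    EU u (constAct S z) q = u z :=
  fInt_const hq (u z)

lemma EU_image_constAct {u : V → ℝ} (hC : C ⊆ ProbCharges S) (hne : C.Nonempty) (z : V) :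
    EU u (constAct S z) '' C = {u z} :=
  (image_congr fun _ hq => EU_constAct (hC hq) z).trans (hne.image_const _)

lemma minEU_constAct {u : V → ℝ} (hC : C ⊆ ProbCharges S) (hne : C.Nonempty) (z : V) :
    minEU u C (constAct S z) = u z := by
  rw [minEU, EU_image_constAct hC hne, csInf_singleton]

lemma maxEU_constAct {u : V → ℝ} (hD : D ⊆ ProbCharges S) (hne : D.Nonempty) (z : V) :
    maxEU u D (constAct S z) = u z := by
  rw [maxEU, EU_image_constAct hD hne, csSup_singleton]

end ExpectedUtility

section Acts

open MeasureTheory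

variable {S : Type*} [MeasurableSpace S] {V : Type*} [AddCommGroup V] [Module ℝ V]
  {X : Set V} {u : V → ℝ}

lemma IsAffineOn.convex_image (hu : IsAffineOn u X) (hX : Convex ℝ X) : Convex ℝ (u '' X) := by
  rintro _ ⟨x, hx, rfl⟩ _ ⟨y, hy, rfl⟩ a b ha hb hab
  obtain rfl : b = 1 - a := by linarith
  exact ⟨a • x + (1 - a) • y, hX hx hy ha hb hab, hu x hx y hy a ha (by linarith)⟩

lemma IsAffineOn.exists_between (hu : IsAffineOn u X) (hX : Convex ℝ X) {a b : ℝ}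
    (ha : a ∈ u '' X) (hb : b ∈ u '' X) (hab : a < b) : ∃ z ∈ X, a < u z ∧ u z < b := by
  obtain ⟨z, hz, hmid⟩ := (convex_iff_ordConnected.mp (hu.convex_image hX)).out ha hb
    (show (a + b) / 2 ∈ Icc a b from ⟨by linarith, by linarith⟩)
  exact ⟨z, hz, by linarith, by linarith⟩

lemma EU_mem_image (hX : Convex ℝ X) (hu : IsAffineOn u X) {f : S → V} (hf : IsAct X f)
    {q : MSet S → ℝ} (hq : q ∈ ProbCharges S) : EU u f q ∈ u '' X :=
  fInt_mem_of_convex hq ((SimpleFunc.mk f hf.2.2 hf.2.1).map u) (hu.convex_image hX)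
    fun s => mem_image_of_mem u (hf.1 s)

/-- Spread the range of `ψ` affinely over the segment between two outcomes of different
utility. -/
lemma exists_act_utility_eq (hX : Convex ℝ X) (hu : IsAffineOn u X) (hnc : NonConstOn u X)
    (ψ : SimpleFunc S ℝ) : ∃ f, IsAct X f ∧ ∃ a > 0, ∃ b, ∀ s : S, u (f s) = a * ψ s + b := by
  obtain ⟨x, hx, y, hy, hxy⟩ : ∃ x ∈ X, ∃ y ∈ X, u x < u y := by
    obtain ⟨x, hx, y, hy, h⟩ := hnc
    rcases h.lt_or_gt with h | h
    exacts [⟨x, hx, y, hy, h⟩, ⟨y, hy, x, hx, h⟩]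
  obtain ⟨m, hm⟩ := ψ.finite_range.bddBelow
  obtain ⟨M, hM⟩ := ψ.finite_range.bddAbove
  -- `max … 0` keeps `d` positive when `S` is empty and the bounds `m`, `M` are arbitrary.
  set d := max (M - m) 0 + 1
  have hθ (s : S) : 0 ≤ (ψ s - m) / d ∧ (ψ s - m) / d ≤ 1 := by
    have h₁ := hm (mem_range_self s)
    have h₂ := hM (mem_range_self s)
    have hd : 0 < d := by positivity
    have h₃ : M - m ≤ max (M - m) 0 := le_max_left _ _
    exact ⟨div_nonneg (by linarith) hd.le, (div_le_one hd).mpr (by linarith)⟩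
  set F := ψ.map fun r => ((r - m) / d) • y + (1 - (r - m) / d) • x
  refine ⟨F, ⟨fun s => hX hy hx (hθ s).1 (by linarith [(hθ s).2]) (by ring),
    F.finite_range, F.measurableSet_fiber⟩, (u y - u x) / d, ?_, u x - (u y - u x) / d * m,
    fun s => ?_⟩
  · exact div_pos (by linarith) (by positivity)
  · have hd : d ≠ 0 := by positivity
    change u (((ψ s - m) / d) • y + (1 - (ψ s - m) / d) • x) = _
    rw [hu y hy x hx _ (hθ s).1 (hθ s).2]
    field_simp
    ring

lemma exists_act_EU_eq_sum (hX : Convex ℝ X) (hu : IsAffineOn u X) (hnc : NonConstOn u X)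
    (c : MSet S →₀ ℝ) : ∃ f, IsAct X f ∧ ∃ a > 0, ∃ b, ∀ q ∈ ProbCharges S,
      EU u f q = a * ∑ A ∈ c.support, c A * q A + b := by
  obtain ⟨f, hf, a, ha, b, hfψ⟩ := exists_act_utility_eq hX hu hnc
    (∑ A ∈ c.support, (SimpleFunc.const S (c A)).piecewise A.1 A.2 0)
  refine ⟨f, hf, a, ha, b, fun q hq => ?_⟩
  rw [EU, funext hfψ, fInt_affine hq, fInt_sum hq]
  simp_rw [fInt_piecewise_const_zero hq]

variable {C : Set (MSet S → ℝ)} {p : MSet S → ℝ}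

lemma exists_act_EU_lt_of_notMem (hX : Convex ℝ X) (hu : IsAffineOn u X)
    (hnc : NonConstOn u X) (hC : C ⊆ ProbCharges S) (hconv : Convex ℝ C) (hcomp : IsCompact C)
    (hp : p ∈ ProbCharges S) (hpC : p ∉ C) :
    ∃ f, IsAct X f ∧ ∀ q ∈ C, EU u f q < EU u f p := by
  obtain ⟨c, hc⟩ := exists_finsupp_sum_lt_of_notMem hconv hcomp hpC
  obtain ⟨f, hf, a, ha, b, hEU⟩ := exists_act_EU_eq_sum hX hu hnc c
  refine ⟨f, hf, fun q hq => ?_⟩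
  rw [hEU q (hC hq), hEU p hp]
  linarith [mul_lt_mul_of_pos_left (hc q hq) ha]

lemma exists_act_lt_EU_of_notMem (hX : Convex ℝ X) (hu : IsAffineOn u X)
    (hnc : NonConstOn u X) (hC : C ⊆ ProbCharges S) (hconv : Convex ℝ C) (hcomp : IsCompact C)
    (hp : p ∈ ProbCharges S) (hpC : p ∉ C) :
    ∃ f, IsAct X f ∧ ∀ q ∈ C, EU u f p < EU u f q := by
  obtain ⟨c, hc⟩ := exists_finsupp_sum_lt_of_notMem hconv hcomp hpC
  obtain ⟨f, hf, a, ha, b, hEU⟩ := exists_act_EU_eq_sum hX hu hnc (-c)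
  refine ⟨f, hf, fun q hq => ?_⟩
  rw [hEU q (hC hq), hEU p hp]
  simp only [Finsupp.support_neg, Finsupp.neg_apply, neg_mul, Finset.sum_neg_distrib, mul_neg]
  linarith [mul_lt_mul_of_pos_left (hc q hq) ha]

end Acts

section Conservative

variable {S : Type*} [MeasurableSpace S] {V : Type*} [AddCommGroup V] [Module ℝ V]
  {X : Set V} {u : V → ℝ} {Rhp Rt : (S → V) → (S → V) → Prop}
  {CHP DHP CT DT : Set (MSet S → ℝ)}

def MoreConservative (X : Set V) (R₁ R₂ : (S → V) → (S → V) → Prop) : Prop :=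
  ∀ f g, IsAct X f → IsAct X g → R₁ f g → R₂ f g

lemma IsTwofoldRep.moreConservative_of_subset (hhp : IsHPRep X Rhp u CHP DHP)
    (ht : IsTwofoldRep X Rt u CT DT) (hC : CHP ⊆ CT) (hD : DHP ⊆ DT) :
    MoreConservative X Rt Rhp := by
  intro f g hf hg hfg
  obtain ⟨-, -, hC0, -, -, -, hCc, hDc, -, -, ⟨p, hpC, hpD⟩, hiff⟩ := hhp
  obtain ⟨-, -, -, -, -, -, hCc', hDc', -, -, -, hiff'⟩ := ht
  rw [hiff' f g hf hg] at hfg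
  have hf' := minEU_anti hCc' hC0 hC u f
  have hg' := maxEU_mono hDc' ⟨p, hpD⟩ hD u g
  have hf'' := minEU_le_maxEU hCc hDc ⟨hpC, hpD⟩ u f
  have hg'' := minEU_le_maxEU hCc hDc ⟨hpC, hpD⟩ u g
  exact (hiff f g hf hg).2 ⟨by linarith, by linarith⟩

lemma IsTwofoldRep.subset_left_of_moreConservative (hX : Convex ℝ X)
    (hhp : IsHPRep X Rhp u CHP DHP) (ht : IsTwofoldRep X Rt u CT DT)
    (hcons : MoreConservative X Rt Rhp) : CHP ⊆ CT := by
  obtain ⟨hu, hnc, hC0, -, hCP, -, hCc, -, -, -, -, hiff⟩ := hhp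
  obtain ⟨-, -, hC0', hD0', hCP', hDP', hCc', -, hCv', -, -, hiff'⟩ := ht
  intro p hp
  by_contra hpC
  obtain ⟨f, hf, hfp⟩ := exists_act_lt_EU_of_notMem hX hu hnc hCP' hCv' hCc' (hCP hp) hpC
  obtain ⟨q, hq, hmin⟩ := hCc'.exists_minEU_eq hC0' u f
  obtain ⟨z, hz, hpz, hzq⟩ := hu.exists_between hX (EU_mem_image hX hu hf (hCP hp))
    (EU_mem_image hX hu hf (hCP' hq)) (hfp q hq)
  have hRt : Rt f (constAct S z) := by
    rw [hiff' f _ hf (isAct_constAct hz), maxEU_constAct hDP' hD0', hmin]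
    exact hzq
  have hRhp := ((hiff f _ hf (isAct_constAct hz)).1 (hcons f _ hf (isAct_constAct hz) hRt)).1
  rw [minEU_constAct hCP hC0] at hRhp
  linarith [minEU_le hCc hp u f]

lemma IsTwofoldRep.subset_right_of_moreConservative (hX : Convex ℝ X)
    (hhp : IsHPRep X Rhp u CHP DHP) (ht : IsTwofoldRep X Rt u CT DT)
    (hcons : MoreConservative X Rt Rhp) : DHP ⊆ DT := by
  obtain ⟨hu, hnc, -, hD0, -, hDP, -, hDc, -, -, -, hiff⟩ := hhp
  obtain ⟨-, -, hC0', hD0', hCP', hDP', -, hDc', -, hDv', -, hiff'⟩ := ht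
  intro p hp
  by_contra hpD
  obtain ⟨g, hg, hgp⟩ := exists_act_EU_lt_of_notMem hX hu hnc hDP' hDv' hDc' (hDP hp) hpD
  obtain ⟨q, hq, hmax⟩ := hDc'.exists_maxEU_eq hD0' u g
  obtain ⟨z, hz, hqz, hzp⟩ := hu.exists_between hX (EU_mem_image hX hu hg (hDP' hq))
    (EU_mem_image hX hu hg (hDP hp)) (hgp q hq)
  have hRt : Rt (constAct S z) g := by
    rw [hiff' _ g (isAct_constAct hz) hg, minEU_constAct hCP' hC0', hmax]
    exact hqz
  have hRhp := ((hiff _ g (isAct_constAct hz) hg).1 (hcons _ g (isAct_constAct hz) hg hRt)).2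
  rw [maxEU_constAct hDP hD0] at hRhp
  linarith [le_maxEU hDc hp u g]

end Conservative

section Statement

variable {S : Type*} [MeasurableSpace S] [Nonempty S]
variable {V : Type*} [AddCommGroup V] [Module ℝ V]

theorem statement5_general (X : Set V) (hX : Convex ℝ X)
    (Rhp Rt : (S → V) → (S → V) → Prop) (u : V → ℝ)
    (CHP DHP CT DT : Set (MSet S → ℝ))
    (hhp : IsHPRep X Rhp u CHP DHP) (ht : IsTwofoldRep X Rt u CT DT) :
    (∀ f g, IsAct X f → IsAct X g → Rt f g → Rhp f g) ↔ (CHP ⊆ CT ∧ DHP ⊆ DT) :=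
  ⟨fun hcons => ⟨ht.subset_left_of_moreConservative hX hhp hcons,
      ht.subset_right_of_moreConservative hX hhp hcons⟩,
    fun ⟨hC, hD⟩ => ht.moreConservative_of_subset hhp hC hD⟩

/-- Proposition 1(ii): a twofold preference `≻_T` with
representation `(u, C_T, D_T)` is more conservative than the hope-and-prepare
preference `≻_HP` with representation `(u, C_HP, D_HP)` iff `C_HP ⊆ C_T` and
`D_HP ⊆ D_T`. -/
theorem statement5 (X : Set V) (hX : Convex ℝ X) (hX2 : ∃ x ∈ X, ∃ y ∈ X, x ≠ y)
    (Rhp Rt : (S → V) → (S → V) → Prop) (u : V → ℝ)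
    (CHP DHP CT DT : Set (MSet S → ℝ))
    (hhp : IsHPRep X Rhp u CHP DHP) (ht : IsTwofoldRep X Rt u CT DT) :
    (∀ f g, IsAct X f → IsAct X g → Rt f g → Rhp f g) ↔ (CHP ⊆ CT ∧ DHP ⊆ DT) :=
  statement5_general X hX Rhp Rt u CHP DHP CT DT hhp ht

end Statement
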